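/- Define the rotation matrix R = Σ_{t=0}^T (U_t ⋯ U_1) ⊗ E_{t,t} (the product for t = 0 being the identity 1_N). Then R is unitary, and R^† · H_prop · R = 1_N ⊗ A, where A is the clock matrix regarded as a complex matrix. -/

import Mathlib

open Matrix Kronecker BigOperators

variable {N T : ℕ}

/-- `prodU U t = U_t ⋯ U_1` (with `U_k := U ⟨k-1⟩`); for `t = 0` it is the identity. -/
noncomputable def prodU (U : Fin T → Matrix (Fin N) (Fin N) ℂ) : ℕ → Matrix (Fin N) (Fin N) ℂ
  | 0 => 1
  | s + 1 => (if h : s < T then U ⟨s, h⟩ else 1) * prodU U s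

/-- The matrix `E_{s,t}` with a single `1` in entry `(s,t)`. -/
noncomputable def Eij (s t : Fin (T + 1)) : Matrix (Fin (T + 1)) (Fin (T + 1)) ℂ :=
  Matrix.single s t 1

/-- The `t`-th standard basis vector `e_t` of `ℂ^{T+1}`. -/
noncomputable def eVec (t : Fin (T + 1)) : Fin (T + 1) → ℂ := fun s => if s = t then 1 else 0

/-- Kronecker product of a vector in `ℂ^N` with a vector in `ℂ^{T+1}`. -/
noncomputable def vecKron (x : Fin N → ℂ) (y : Fin (T + 1) → ℂ) : Fin N × Fin (T + 1) → ℂ :=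
  fun p => x p.1 * y p.2

/-- The history vector `η_α = ∑_{t=0}^T (U_t ⋯ U_1 α) ⊗ e_t`. -/
noncomputable def historyVec (U : Fin T → Matrix (Fin N) (Fin N) ℂ) (α : Fin N → ℂ) :
    Fin N × Fin (T + 1) → ℂ :=
  ∑ t : Fin (T + 1), vecKron ((prodU U (t : ℕ)).mulVec α) (eVec t)

/-- The propagation Hamiltonian term `H_prop(t)` verifying the step from time `t-1`
to time `t` (here `t ∈ {1, …, T}` is encoded by `t : Fin T`, via `t.castSucc ↦ t.succ`). -/
noncomputable def HpropT (U : Fin T → Matrix (Fin N) (Fin N) ℂ) (t : Fin T) :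
    Matrix (Fin N × Fin (T + 1)) (Fin N × Fin (T + 1)) ℂ :=
  (1 / 2 : ℂ) •
    ((1 : Matrix (Fin N) (Fin N) ℂ) ⊗ₖ (Eij t.succ t.succ + Eij t.castSucc t.castSucc)
      - (U t) ⊗ₖ Eij t.succ t.castSucc - (U t)ᴴ ⊗ₖ Eij t.castSucc t.succ)

/-- The full propagation Hamiltonian `H_prop = ∑_{t=1}^T H_prop(t)`. -/
noncomputable def Hprop (U : Fin T → Matrix (Fin N) (Fin N) ℂ) :
    Matrix (Fin N × Fin (T + 1)) (Fin N × Fin (T + 1)) ℂ :=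
  ∑ t : Fin T, HpropT U t

/-- The `(T+1) × (T+1)` clock matrix: `1` on the interior diagonal, `1/2` at the two
diagonal corners, `-1/2` on the off-diagonals adjacent to the diagonal, `0` elsewhere. -/
noncomputable def clockMatrix (T : ℕ) : Matrix (Fin (T + 1)) (Fin (T + 1)) ℝ :=
  fun s t =>
    if s = t then (if (s : ℕ) = 0 ∨ (s : ℕ) = T then 1 / 2 else 1)
    else if (s : ℕ) = (t : ℕ) + 1 ∨ (t : ℕ) = (s : ℕ) + 1 then -(1 / 2) else 0

/-- The rotation matrix `R = ∑_t (U_t ⋯ U_1) ⊗ E_{t,t}`. -/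
noncomputable def rotR {N T : ℕ} (U : Fin T → Matrix (Fin N) (Fin N) ℂ) :
    Matrix (Fin N × Fin (T + 1)) (Fin N × Fin (T + 1)) ℂ :=
  ∑ t : Fin (T + 1), (prodU U (t : ℕ)) ⊗ₖ Eij t t

/- ============ auxiliary lemmas ============ -/

lemma kron_conjTranspose {l m n p : Type*} (A : Matrix l m ℂ) (B : Matrix n p ℂ) :
    (A ⊗ₖ B)ᴴ = Aᴴ ⊗ₖ Bᴴ := by
  ext ⟨i, j⟩ ⟨k, l⟩
  simp [conjTranspose_apply, kroneckerMap_apply]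

lemma Eij_conjTranspose {T : ℕ} (s t : Fin (T + 1)) : (Eij s t)ᴴ = Eij t s := by
  ext a b
  simp only [Eij, conjTranspose_apply, single, of_apply]
  split_ifs with h1 h2 h2 <;> simp_all [and_comm] <;> simp_all

lemma Eij_mul {T : ℕ} (s t a b : Fin (T + 1)) :
    Eij s t * Eij a b = if t = a then Eij s b else 0 := by
  by_cases h : t = a
  · subst h; simp [Eij]
  · rw [if_neg h]; simp only [Eij]; rw [Matrix.single_mul_single_of_ne (h := h)]

lemma prodU_unitary (U : Fin T → Matrix (Fin N) (Fin N) ℂ)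
    (hU : ∀ t, (U t)ᴴ * U t = 1 ∧ U t * (U t)ᴴ = 1) (s : ℕ) :
    (prodU U s)ᴴ * prodU U s = 1 ∧ prodU U s * (prodU U s)ᴴ = 1 := by
  induction s with
  | zero => simp [prodU]
  | succ s ih =>
    set V : Matrix (Fin N) (Fin N) ℂ := if h : s < T then U ⟨s, h⟩ else 1 with hV
    have hV1 : Vᴴ * V = 1 := by
      rw [hV]; split_ifs with h
      · exact (hU ⟨s, h⟩).1
      · simp
    have hV2 : V * Vᴴ = 1 := by
      rw [hV]; split_ifs with h
      · exact (hU ⟨s, h⟩).2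
      · simp
    have h1 : prodU U (s + 1) = V * prodU U s := rfl
    constructor
    · rw [h1, conjTranspose_mul, Matrix.mul_assoc, ← Matrix.mul_assoc Vᴴ, hV1,
        Matrix.one_mul, ih.1]
    · rw [h1, conjTranspose_mul, Matrix.mul_assoc, ← Matrix.mul_assoc (prodU U s), ih.2,
        Matrix.one_mul, hV2]

lemma rotR_conjTranspose (U : Fin T → Matrix (Fin N) (Fin N) ℂ) :
    (rotR U)ᴴ = ∑ t : Fin (T + 1), (prodU U (t : ℕ))ᴴ ⊗ₖ Eij t t := by
  rw [rotR, conjTranspose_sum]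
  exact Finset.sum_congr rfl fun t _ => by rw [kron_conjTranspose, Eij_conjTranspose]

lemma conj_kron (U : Fin T → Matrix (Fin N) (Fin N) ℂ)
    (M : Matrix (Fin N) (Fin N) ℂ) (a b : Fin (T + 1)) :
    (rotR U)ᴴ * (M ⊗ₖ Eij a b) * rotR U
      = ((prodU U (a : ℕ))ᴴ * M * prodU U (b : ℕ)) ⊗ₖ Eij a b := by
  rw [rotR_conjTranspose, rotR, Finset.sum_mul, Finset.sum_mul]
  rw [Finset.sum_eq_single a]
  · rw [Finset.mul_sum, Finset.sum_eq_single b]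
    · rw [← mul_kronecker_mul, ← mul_kronecker_mul, Eij_mul, if_pos rfl, Eij_mul, if_pos rfl]
    · intro u _ hu
      rw [← mul_kronecker_mul, ← mul_kronecker_mul, Eij_mul, if_pos rfl, Eij_mul,
        if_neg (Ne.symm hu)]
      simp
    · simp
  · intro s _ hs
    rw [← mul_kronecker_mul, Eij_mul, if_neg hs]
    simp [Finset.mul_sum]
  · simp

lemma sum_Eij_diag (T : ℕ) : ∑ t : Fin (T + 1), Eij t t = (1 : Matrix (Fin (T+1)) (Fin (T+1)) ℂ) := by
  ext i j
  rw [Matrix.sum_apply]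
  simp only [Eij, single, of_apply, Matrix.one_apply]
  rw [Finset.sum_eq_single i]
  · by_cases h : i = j <;> simp [h]
  · intro t _ ht; simp [ht]
  · simp

lemma sum_if_shift (x : ℂ) (i j a b T : ℕ) :
    ∑ k ∈ Finset.range T, (if a = k + i ∧ b = k + j then x else 0)
      = if i ≤ a ∧ a - i < T ∧ a + j = b + i then x else 0 := by
  induction T with
  | zero =>
    rw [Finset.sum_range_zero]
    split_ifs with h
    · exfalso; omega
    · rfl
  | succ T ih =>
    rw [Finset.sum_range_succ, ih]
    split_ifs <;> first | ring1 | (exfalso; omega)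

lemma clock_eq_sum {T : ℕ} (hT : 1 ≤ T) :
    (clockMatrix T).map (fun x => (x : ℂ))
      = ∑ t : Fin T, (1 / 2 : ℂ) •
          (Eij t.succ t.succ + Eij t.castSucc t.castSucc
            - Eij t.succ t.castSucc - Eij t.castSucc t.succ) := by
  ext s u
  rw [Matrix.sum_apply]
  have hsum : ∀ t : Fin T,
      ((1 / 2 : ℂ) • (Eij t.succ t.succ + Eij t.castSucc t.castSucc
        - Eij t.succ t.castSucc - Eij t.castSucc t.succ)) s u
      = (1/2 : ℂ) * ((if (s:ℕ) = (t:ℕ) + 1 ∧ (u:ℕ) = (t:ℕ) + 1 then 1 else 0)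
          + (if (s:ℕ) = (t:ℕ) ∧ (u:ℕ) = (t:ℕ) then 1 else 0)
          - (if (s:ℕ) = (t:ℕ) + 1 ∧ (u:ℕ) = (t:ℕ) then 1 else 0)
          - (if (s:ℕ) = (t:ℕ) ∧ (u:ℕ) = (t:ℕ) + 1 then 1 else 0)) := by
    intro t
    have e1 : ∀ (v w : Fin (T+1)), (Eij v w) s u = if (s:ℕ) = (v:ℕ) ∧ (u:ℕ) = (w:ℕ) then (1:ℂ) else 0 := by
      intro v w
      simp only [Eij, single, of_apply]
      congr 1
      simp [Fin.ext_iff, eq_comm]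
    simp only [Matrix.smul_apply, Matrix.sub_apply, Matrix.add_apply, e1,
      Fin.val_succ, Fin.coe_castSucc, smul_eq_mul]
  rw [Finset.sum_congr rfl (fun t _ => hsum t)]
  rw [Fin.sum_univ_eq_sum_range
    (fun k => (1/2 : ℂ) * ((if (s:ℕ) = k + 1 ∧ (u:ℕ) = k + 1 then 1 else 0)
          + (if (s:ℕ) = k ∧ (u:ℕ) = k then 1 else 0)
          - (if (s:ℕ) = k + 1 ∧ (u:ℕ) = k then 1 else 0)
          - (if (s:ℕ) = k ∧ (u:ℕ) = k + 1 then 1 else 0)))]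
  rw [← Finset.mul_sum]
  have expand : ∀ k, ((if (s:ℕ) = k + 1 ∧ (u:ℕ) = k + 1 then (1:ℂ) else 0)
          + (if (s:ℕ) = k ∧ (u:ℕ) = k then 1 else 0)
          - (if (s:ℕ) = k + 1 ∧ (u:ℕ) = k then 1 else 0)
          - (if (s:ℕ) = k ∧ (u:ℕ) = k + 1 then 1 else 0))
      = ((if (s:ℕ) = k + 1 ∧ (u:ℕ) = k + 1 then (1:ℂ) else 0)
          + (if (s:ℕ) = k + 0 ∧ (u:ℕ) = k + 0 then 1 else 0))
          - ((if (s:ℕ) = k + 1 ∧ (u:ℕ) = k + 0 then 1 else 0)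
          + (if (s:ℕ) = k + 0 ∧ (u:ℕ) = k + 1 then 1 else 0)) := by
    intro k; simp only [Nat.add_zero]; ring
  rw [Finset.sum_congr rfl (fun k _ => expand k), Finset.sum_sub_distrib,
    Finset.sum_add_distrib, Finset.sum_add_distrib,
    sum_if_shift, sum_if_shift, sum_if_shift, sum_if_shift]
  have hs := s.isLt
  have hu := u.isLt
  simp only [Matrix.map_apply, clockMatrix, Fin.ext_iff]
  split_ifs <;> push_cast <;> first | (exfalso; omega) | norm_num

lemma one_kron_sum {N T : ℕ} {ι : Type*} (s : Finset ι)
    (M : ι → Matrix (Fin (T + 1)) (Fin (T + 1)) ℂ) :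
    (1 : Matrix (Fin N) (Fin N) ℂ) ⊗ₖ (∑ t ∈ s, M t)
      = ∑ t ∈ s, (1 : Matrix (Fin N) (Fin N) ℂ) ⊗ₖ M t := by
  ext ⟨i, a⟩ ⟨j, b⟩
  simp [kroneckerMap_apply, Matrix.sum_apply, Finset.mul_sum]

/-- The rotation `R` is unitary and conjugating the propagation Hamiltonian by it gives
`1_N ⊗ A`, where `A` is the clock matrix regarded as a complex matrix. -/
theorem stmt_7 {N T : ℕ} (hN : 1 ≤ N) (hT : 1 ≤ T)
    (U : Fin T → Matrix (Fin N) (Fin N) ℂ)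
    (hU : ∀ t, (U t)ᴴ * U t = 1 ∧ U t * (U t)ᴴ = 1) :
    ((rotR U)ᴴ * rotR U = 1 ∧ rotR U * (rotR U)ᴴ = 1) ∧
      (rotR U)ᴴ * Hprop U * rotR U =
        (1 : Matrix (Fin N) (Fin N) ℂ) ⊗ₖ (clockMatrix T).map (fun x => (x : ℂ)) := by
  have hPU := prodU_unitary U hU
  have key : ∀ t : Fin T, prodU U ((t : ℕ) + 1) = U t * prodU U (t : ℕ) := by
    intro t; simp [prodU, t.isLt]
  refine ⟨⟨?_, ?_⟩, ?_⟩
  · rw [rotR_conjTranspose, rotR, Finset.sum_mul]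
    have step : ∀ s : Fin (T + 1),
        ((prodU U (s : ℕ))ᴴ ⊗ₖ Eij s s) * (∑ t : Fin (T + 1), prodU U (t : ℕ) ⊗ₖ Eij t t)
          = (1 : Matrix (Fin N) (Fin N) ℂ) ⊗ₖ Eij s s := by
      intro s
      rw [Finset.mul_sum, Finset.sum_eq_single s]
      · rw [← mul_kronecker_mul, Eij_mul, if_pos rfl, (hPU (s : ℕ)).1]
      · intro t _ ht
        rw [← mul_kronecker_mul, Eij_mul, if_neg (Ne.symm ht)]
        simp
      · simp
    rw [Finset.sum_congr rfl fun s _ => step s, ← one_kron_sum, sum_Eij_diag,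
      Matrix.one_kronecker_one]
  · rw [rotR_conjTranspose, rotR, Finset.sum_mul]
    have step : ∀ s : Fin (T + 1),
        ((prodU U (s : ℕ)) ⊗ₖ Eij s s) * (∑ t : Fin (T + 1), (prodU U (t : ℕ))ᴴ ⊗ₖ Eij t t)
          = (1 : Matrix (Fin N) (Fin N) ℂ) ⊗ₖ Eij s s := by
      intro s
      rw [Finset.mul_sum, Finset.sum_eq_single s]
      · rw [← mul_kronecker_mul, Eij_mul, if_pos rfl, (hPU (s : ℕ)).2]
      · intro t _ ht
        rw [← mul_kronecker_mul, Eij_mul, if_neg (Ne.symm ht)]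
        simp
      · simp
    rw [Finset.sum_congr rfl fun s _ => step s, ← one_kron_sum, sum_Eij_diag,
      Matrix.one_kronecker_one]
  · rw [Hprop, Finset.mul_sum, Finset.sum_mul, clock_eq_sum hT, one_kron_sum]
    refine Finset.sum_congr rfl fun t _ => ?_
    set P : Matrix (Fin N) (Fin N) ℂ := prodU U (t : ℕ) with hP
    have hsucc : ((t.succ : Fin (T + 1)) : ℕ) = (t : ℕ) + 1 := rfl
    have hcs : ((t.castSucc : Fin (T + 1)) : ℕ) = (t : ℕ) := rfl
    have hA : (prodU U ((t.succ : Fin (T+1)) : ℕ))ᴴ * (1 : Matrix (Fin N) (Fin N) ℂ)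
        * prodU U ((t.succ : Fin (T+1)) : ℕ) = 1 := by
      rw [Matrix.mul_one, (hPU _).1]
    have hB : (prodU U ((t.castSucc : Fin (T+1)) : ℕ))ᴴ * (1 : Matrix (Fin N) (Fin N) ℂ)
        * prodU U ((t.castSucc : Fin (T+1)) : ℕ) = 1 := by
      rw [Matrix.mul_one, (hPU _).1]
    have hC : (prodU U ((t.succ : Fin (T+1)) : ℕ))ᴴ * U t
        * prodU U ((t.castSucc : Fin (T+1)) : ℕ) = 1 := by
      rw [hsucc, hcs, key t, conjTranspose_mul, Matrix.mul_assoc (prodU U (t:ℕ))ᴴ (U t)ᴴ (U t),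
        (hU t).1, Matrix.mul_one, (hPU (t : ℕ)).1]
    have hD : (prodU U ((t.castSucc : Fin (T+1)) : ℕ))ᴴ * (U t)ᴴ
        * prodU U ((t.succ : Fin (T+1)) : ℕ) = 1 := by
      rw [hsucc, hcs, key t, ← Matrix.mul_assoc,
        Matrix.mul_assoc (prodU U (t:ℕ))ᴴ (U t)ᴴ (U t), (hU t).1, Matrix.mul_one,
        (hPU (t : ℕ)).1]
    rw [HpropT, Matrix.mul_smul, Matrix.smul_mul]
    rw [Matrix.kronecker_add, Matrix.mul_sub, Matrix.mul_sub, Matrix.mul_add,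
      Matrix.sub_mul, Matrix.sub_mul, Matrix.add_mul]
    rw [conj_kron, conj_kron, conj_kron, conj_kron, hA, hB, hC, hD]
    ext ⟨i, a⟩ ⟨j, b⟩
    simp only [Matrix.smul_apply, Matrix.sub_apply, Matrix.add_apply, kroneckerMap_apply,
      smul_eq_mul]
    ring
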